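/- If RWD((P,μ^P),(Q,μ^Q)) = 0, then (P,μ^P) ∼ (Q,μ^Q); i.e., there exist an orthogonal matrix R and a bijection π with p_i R = q_{π(i)} and μ^P_i = μ^Q_{π(i)}. In particular ℓ_P = ℓ_Q. -/
import Mathlib


open Matrix

/-- The discrete admissible set of couplings between probability vectors. -/
def ADM {a b : ℕ} (μP : Fin a → ℝ) (μQ : Fin b → ℝ) : Set (Matrix (Fin a) (Fin b) ℝ) :=
  {σ | (∀ i j, 0 ≤ σ i j) ∧ (∀ i, ∑ j, σ i j = μP i) ∧ (∀ j, ∑ i, σ i j = μQ j)}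

/-- The transport cost `Σ_{i,j} σ_{ij} ‖p_i R − q_j‖²`. -/
def cost {n a b : ℕ} (p : Fin a → Fin n → ℝ) (q : Fin b → Fin n → ℝ)
    (R : Matrix (Fin n) (Fin n) ℝ) (σ : Matrix (Fin a) (Fin b) ℝ) : ℝ :=
  ∑ i, ∑ j, σ i j * ∑ k, (Matrix.vecMul (p i) R k - q j k) ^ 2

/-- The robust Wasserstein distance between two weighted point clouds in `ℝ^n`:
`RWD((P,μ^P),(Q,μ^Q))² = min_{R ∈ O(n), σ ∈ ADM(μ^P,μ^Q)} Σ_{i,j} σ_{ij}‖p_i R − q_j‖²`. -/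
noncomputable def RWD {n a b : ℕ} (p : Fin a → Fin n → ℝ) (μP : Fin a → ℝ)
    (q : Fin b → Fin n → ℝ) (μQ : Fin b → ℝ) : ℝ :=
  Real.sqrt (sInf {c : ℝ | ∃ R : Matrix (Fin n) (Fin n) ℝ, R * Rᵀ = 1 ∧
    ∃ σ ∈ ADM μP μQ, c = cost p q R σ})

lemma cost_nonneg {n a b : ℕ} (p : Fin a → Fin n → ℝ) (q : Fin b → Fin n → ℝ)
    (R : Matrix (Fin n) (Fin n) ℝ) (σ : Matrix (Fin a) (Fin b) ℝ)
    (hσ : ∀ i j, 0 ≤ σ i j) : 0 ≤ cost p q R σ := by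
  refine Finset.sum_nonneg fun i _ => Finset.sum_nonneg fun j _ => ?_
  exact mul_nonneg (hσ i j) (Finset.sum_nonneg fun k _ => sq_nonneg _)

lemma cost_continuous {n a b : ℕ} (p : Fin a → Fin n → ℝ) (q : Fin b → Fin n → ℝ) :
    Continuous (fun x : (Matrix (Fin n) (Fin n) ℝ) × Matrix (Fin a) (Fin b) ℝ =>
      cost p q x.1 x.2) := by
  unfold cost
  refine continuous_finset_sum _ fun i _ => continuous_finset_sum _ fun j _ => ?_
  refine Continuous.mul ((continuous_apply_apply i j).comp continuous_snd) ?_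
  refine continuous_finset_sum _ fun k _ => Continuous.pow ?_ 2
  refine Continuous.sub ?_ continuous_const
  simp only [Matrix.vecMul, dotProduct]
  exact continuous_finset_sum _ fun l _ =>
    continuous_const.mul ((continuous_apply_apply l k).comp continuous_fst)

/-- if `RWD((P,μ^P),(Q,μ^Q)) = 0` for weighted point clouds with distinct
points and strictly positive weights summing to 1, then `(P,μ^P) ∼ (Q,μ^Q)`: there
exist an orthogonal `R` and a bijection `π` with `p_i R = q_{π(i)}` and
`μ^P_i = μ^Q_{π(i)}` (in particular `ℓ_P = ℓ_Q`). -/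
theorem rwd_eq_zero_iff_equiv {n a b : ℕ} (p : Fin a → Fin n → ℝ) (μP : Fin a → ℝ)
    (q : Fin b → Fin n → ℝ) (μQ : Fin b → ℝ)
    (hpinj : Function.Injective p) (hqinj : Function.Injective q)
    (hP0 : ∀ i, 0 < μP i) (hQ0 : ∀ j, 0 < μQ j)
    (hP1 : ∑ i, μP i = 1) (hQ1 : ∑ j, μQ j = 1)
    (hzero : RWD p μP q μQ = 0) :
    ∃ R : Matrix (Fin n) (Fin n) ℝ, R * Rᵀ = 1 ∧ ∃ π : Fin a ≃ Fin b,
      ∀ i, Matrix.vecMul (p i) R = q (π i) ∧ μP i = μQ (π i) := by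
  classical
  set S : Set ℝ := {c : ℝ | ∃ R : Matrix (Fin n) (Fin n) ℝ, R * Rᵀ = 1 ∧
    ∃ σ ∈ ADM μP μQ, c = cost p q R σ} with hS
  -- the feasible set
  set K : Set ((Matrix (Fin n) (Fin n) ℝ) × Matrix (Fin a) (Fin b) ℝ) :=
    {x | x.1 * x.1ᵀ = 1 ∧ x.2 ∈ ADM μP μQ} with hK
  have hSimg : S = (fun x : (Matrix (Fin n) (Fin n) ℝ) × Matrix (Fin a) (Fin b) ℝ =>
      cost p q x.1 x.2) '' K := by
    ext c
    constructor
    · rintro ⟨R, hR, σ, hσ, rfl⟩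
      exact ⟨(R, σ), ⟨hR, hσ⟩, rfl⟩
    · rintro ⟨⟨R, σ⟩, ⟨hR, hσ⟩, rfl⟩
      exact ⟨R, hR, σ, hσ, rfl⟩
  -- K is closed
  have hKclosed : IsClosed K := by
    have h1 : IsClosed {x : (Matrix (Fin n) (Fin n) ℝ) × Matrix (Fin a) (Fin b) ℝ |
        x.1 * x.1ᵀ = 1} :=
      isClosed_eq (Continuous.matrix_mul continuous_fst continuous_fst.matrix_transpose)
        continuous_const
    have h2 : IsClosed {x : (Matrix (Fin n) (Fin n) ℝ) × Matrix (Fin a) (Fin b) ℝ |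
        ∀ i j, 0 ≤ x.2 i j} := by
      have : {x : (Matrix (Fin n) (Fin n) ℝ) × Matrix (Fin a) (Fin b) ℝ |
          ∀ i j, 0 ≤ x.2 i j} = ⋂ i, ⋂ j, {x | 0 ≤ x.2 i j} := by
        ext x; simp
      rw [this]
      exact isClosed_iInter fun i => isClosed_iInter fun j =>
        isClosed_le continuous_const ((continuous_apply_apply i j).comp continuous_snd)
    have h3 : IsClosed {x : (Matrix (Fin n) (Fin n) ℝ) × Matrix (Fin a) (Fin b) ℝ |
        ∀ i, ∑ j, x.2 i j = μP i} := by
      have : {x : (Matrix (Fin n) (Fin n) ℝ) × Matrix (Fin a) (Fin b) ℝ |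
          ∀ i, ∑ j, x.2 i j = μP i} = ⋂ i, {x | ∑ j, x.2 i j = μP i} := by
        ext x; simp
      rw [this]
      exact isClosed_iInter fun i => isClosed_eq
        (continuous_finset_sum _ fun j _ => (continuous_apply_apply i j).comp continuous_snd)
        continuous_const
    have h4 : IsClosed {x : (Matrix (Fin n) (Fin n) ℝ) × Matrix (Fin a) (Fin b) ℝ |
        ∀ j, ∑ i, x.2 i j = μQ j} := by
      have : {x : (Matrix (Fin n) (Fin n) ℝ) × Matrix (Fin a) (Fin b) ℝ |
          ∀ j, ∑ i, x.2 i j = μQ j} = ⋂ j, {x | ∑ i, x.2 i j = μQ j} := by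
        ext x; simp
      rw [this]
      exact isClosed_iInter fun j => isClosed_eq
        (continuous_finset_sum _ fun i _ => (continuous_apply_apply i j).comp continuous_snd)
        continuous_const
    have : K = {x : (Matrix (Fin n) (Fin n) ℝ) × Matrix (Fin a) (Fin b) ℝ | x.1 * x.1ᵀ = 1}
        ∩ ({x | ∀ i j, 0 ≤ x.2 i j} ∩ ({x | ∀ i, ∑ j, x.2 i j = μP i}
          ∩ {x | ∀ j, ∑ i, x.2 i j = μQ j})) := by
      ext x
      simp [hK, ADM, Set.mem_setOf_eq, and_assoc]
    rw [this]
    exact h1.inter (h2.inter (h3.inter h4))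
  -- K is contained in a compact box
  have hKcompact : IsCompact K := by
    set B : Set ((Matrix (Fin n) (Fin n) ℝ) × Matrix (Fin a) (Fin b) ℝ) :=
      (Set.univ.pi fun _ : Fin n => Set.univ.pi fun _ : Fin n => Set.Icc (-1 : ℝ) 1) ×ˢ
      (Set.univ.pi fun _ : Fin a => Set.univ.pi fun _ : Fin b => Set.Icc (0 : ℝ) 1) with hB
    have hBcompact : IsCompact B :=
      IsCompact.prod
        (isCompact_univ_pi fun _ => isCompact_univ_pi fun _ => isCompact_Icc)
        (isCompact_univ_pi fun _ => isCompact_univ_pi fun _ => isCompact_Icc)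
    refine hBcompact.of_isClosed_subset hKclosed ?_
    rintro ⟨R, σ⟩ ⟨hR, hσ0, hσ1, hσ2⟩
    constructor
    · -- entries of R are in [-1,1]
      intro i _
      intro j _
      have hdiag : ∑ k, R i k * R i k = 1 := by
        have := congrArg (fun M => M i i) hR
        simpa [Matrix.mul_apply, Matrix.one_apply, Matrix.transpose_apply] using this
      have hle : R i j * R i j ≤ 1 := by
        calc R i j * R i j ≤ ∑ k, R i k * R i k :=
              Finset.single_le_sum (fun k _ => mul_self_nonneg (R i k)) (Finset.mem_univ j)
          _ = 1 := hdiag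
      have habs : |R i j| ≤ 1 := abs_le_one_iff_mul_self_le_one.mpr hle
      exact abs_le.mp habs
    · -- entries of σ are in [0,1]
      intro i _
      intro j _
      refine ⟨hσ0 i j, ?_⟩
      have h1 : σ i j ≤ μP i := by
        rw [← hσ1 i]
        exact Finset.single_le_sum (fun k _ => hσ0 i k) (Finset.mem_univ j)
      have h2 : μP i ≤ 1 := by
        rw [← hP1]
        exact Finset.single_le_sum (fun k _ => (hP0 k).le) (Finset.mem_univ i)
      exact h1.trans h2
  -- S is compact and nonempty
  have hScompact : IsCompact S := by
    rw [hSimg]; exact hKcompact.image (cost_continuous p q)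
  have hSne : S.Nonempty := by
    refine ⟨cost p q 1 (fun i j => μP i * μQ j), 1, by simp, fun i j => μP i * μQ j, ?_, rfl⟩
    refine ⟨fun i j => mul_nonneg (hP0 i).le (hQ0 j).le, fun i => ?_, fun j => ?_⟩
    · rw [← Finset.mul_sum, hQ1, mul_one]
    · rw [← Finset.sum_mul, hP1, one_mul]
  -- the infimum is attained and is zero
  have hmem : sInf S ∈ S := hScompact.sInf_mem hSne
  obtain ⟨R, hR, σ, hσ, hcost⟩ := hmem
  have hcost0 : cost p q R σ = 0 := by
    have hle : sInf S ≤ 0 := by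
      rw [RWD] at hzero
      exact Real.sqrt_eq_zero'.mp hzero
    have hge : 0 ≤ sInf S := by
      rw [hcost]; exact cost_nonneg p q R σ hσ.1
    have : sInf S = 0 := le_antisymm hle hge
    rw [← hcost, this]
  obtain ⟨hσ0, hσ1, hσ2⟩ := hσ
  -- key: positive mass forces matching points
  have hterm : ∀ i ∈ Finset.univ, ∀ j ∈ Finset.univ,
      σ i j * ∑ k, (Matrix.vecMul (p i) R k - q j k) ^ 2 = 0 := by
    have h1 := (Finset.sum_eq_zero_iff_of_nonneg (fun i _ => Finset.sum_nonneg fun j _ =>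
      mul_nonneg (hσ0 i j) (Finset.sum_nonneg fun k _ => sq_nonneg _))).mp hcost0
    intro i hi j hj
    exact (Finset.sum_eq_zero_iff_of_nonneg (fun j _ =>
      mul_nonneg (hσ0 i j) (Finset.sum_nonneg fun k _ => sq_nonneg _))).mp (h1 i hi) j hj
  have hkey : ∀ i j, 0 < σ i j → Matrix.vecMul (p i) R = q j := by
    intro i j hpos
    have h := hterm i (Finset.mem_univ i) j (Finset.mem_univ j)
    have hsum : ∑ k, (Matrix.vecMul (p i) R k - q j k) ^ 2 = 0 := by
      rcases mul_eq_zero.mp h with h' | h'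
      · exact absurd h' hpos.ne'
      · exact h'
    funext k
    have := (Finset.sum_eq_zero_iff_of_nonneg (fun k _ => sq_nonneg _)).mp hsum k
      (Finset.mem_univ k)
    have := pow_eq_zero_iff (n := 2) (by norm_num) |>.mp this
    linarith [this]
  -- vecMul by R is injective
  have hRinj : Function.Injective (fun v : Fin n → ℝ => Matrix.vecMul v R) := by
    intro v w hvw
    have hvw' : Matrix.vecMul v R = Matrix.vecMul w R := hvw
    have : Matrix.vecMul (Matrix.vecMul v R) Rᵀ = Matrix.vecMul (Matrix.vecMul w R) Rᵀ := by
      rw [hvw']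
    rwa [Matrix.vecMul_vecMul, Matrix.vecMul_vecMul, hR, Matrix.vecMul_one,
      Matrix.vecMul_one] at this
  -- each row has a positive entry
  have hrow : ∀ i, ∃ j, 0 < σ i j := by
    intro i
    by_contra h
    push_neg at h
    have : ∑ j, σ i j = 0 :=
      Finset.sum_eq_zero fun j _ => le_antisymm (h j) (hσ0 i j)
    rw [hσ1 i] at this
    exact absurd this (hP0 i).ne'
  have hcol : ∀ j, ∃ i, 0 < σ i j := by
    intro j
    by_contra h
    push_neg at h
    have : ∑ i, σ i j = 0 :=
      Finset.sum_eq_zero fun i _ => le_antisymm (h i) (hσ0 i j)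
    rw [hσ2 j] at this
    exact absurd this (hQ0 j).ne'
  choose f hf using hrow
  have hfq : ∀ i, Matrix.vecMul (p i) R = q (f i) := fun i => hkey i (f i) (hf i)
  have hfinj : Function.Injective f := by
    intro i i' h
    apply hpinj
    apply hRinj
    simp only
    rw [hfq i, hfq i', h]
  have hfsurj : Function.Surjective f := by
    intro j
    obtain ⟨i, hi⟩ := hcol j
    refine ⟨i, ?_⟩
    apply hqinj
    rw [← hfq i, hkey i j hi]
  set π : Fin a ≃ Fin b := Equiv.ofBijective f ⟨hfinj, hfsurj⟩ with hπ
  refine ⟨R, hR, π, fun i => ⟨hfq i, ?_⟩⟩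
  -- σ is supported on the graph of f
  have hsupp : ∀ i j, j ≠ f i → σ i j = 0 := by
    intro i j hne
    by_contra h
    have hpos : 0 < σ i j := lt_of_le_of_ne (hσ0 i j) (Ne.symm h)
    exact hne (hqinj ((hkey i j hpos).symm.trans (hfq i)))
  have hμP : μP i = σ i (f i) := by
    rw [← hσ1 i]
    exact (Finset.sum_eq_single (f i) (fun j _ hne => hsupp i j hne)
      (fun h => absurd (Finset.mem_univ (f i)) h))
  have hμQ : μQ (f i) = σ i (f i) := by
    rw [← hσ2 (f i)]
    refine (Finset.sum_eq_single i (fun i' _ hne => ?_)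
      (fun h => absurd (Finset.mem_univ i) h))
    by_contra h
    have hpos : 0 < σ i' (f i) := lt_of_le_of_ne (hσ0 i' (f i)) (Ne.symm h)
    exact hne (hfinj (hqinj ((hfq i').symm.trans (hkey i' (f i) hpos))))
  show μP i = μQ (π i)
  have : π i = f i := rfl
  rw [this, hμP, hμQ]
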